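/- Let α, λ, β > 0 and f_V the half-normal density. Then as x → -∞, ∫₀^∞ (1/π) e^{-(1+β²)((x-αv)λ/α)²/2} (2/(β(1+β²)) + 1/(β³(1+β²))) ((x-αv)λ/α)^{-4} f_V(v) dv = O(|x|^{-5} e^{-(λ²/(2α²))(1+β²)x²}). -/

import Mathlib

open Real MeasureTheory Filter Set Asymptotics

noncomputable def halfNormalPdf (v : ℝ) : ℝ :=
  if 0 < v then Real.sqrt (2 / π) * Real.exp (-v ^ 2 / 2) else 0

/-!
Pull the constant factor out of the integral and write `s = 1 + β²`; for `x < 0`, `v > 0`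
put `u = (x - α v) l / α`. Expanding the square gives
`(x - α v)² ≥ x² + 2 α |x| v`, so the Gaussian factor is at most
`exp (-(l² / (2 α²)) s x²) · exp (-(s l² / α) |x| v)`, while `|u| ≥ |x| l / α` bounds `u⁻⁴` by a
multiple of `|x|⁻⁴` and the half-normal density is at most `√(2 / π)`. Integrating the remaining
exponential in `v` over `(0, ∞)` contributes the factor `α / (s l² |x|)`, hence one more power of
`|x|⁻¹`.
-/

lemma halfNormalPdf_nonneg (v : ℝ) : 0 ≤ halfNormalPdf v := by
  unfold halfNormalPdf
  split_ifs <;> positivity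

lemma halfNormalPdf_le (v : ℝ) : halfNormalPdf v ≤ √(2 / π) := by
  unfold halfNormalPdf
  split_ifs
  · exact mul_le_of_le_one_right (sqrt_nonneg _) (exp_le_one_iff.2 (by nlinarith [sq_nonneg v]))
  · positivity

lemma norm_setIntegral_Ioi_le_of_norm_le_mul_exp {E : Type*} [NormedAddCommGroup E]
    [NormedSpace ℝ E] {f : ℝ → E} {B a : ℝ} (ha : 0 < a)
    (hf : ∀ v ∈ Ioi 0, ‖f v‖ ≤ B * exp (-a * v)) :
    ‖∫ v in Ioi 0, f v‖ ≤ B / a := by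
  have hint : IntegrableOn (fun v => B * exp (-a * v)) (Ioi 0) :=
    (integrableOn_exp_mul_Ioi (neg_lt_zero.2 ha) 0).const_mul B
  calc ‖∫ v in Ioi 0, f v‖ ≤ ∫ v in Ioi 0, B * exp (-a * v) :=
        norm_integral_le_of_norm_le hint ((ae_restrict_iff' measurableSet_Ioi).2 (.of_forall hf))
    _ = B / a := by
        rw [integral_const_mul, integral_exp_mul_Ioi (neg_lt_zero.2 ha)]
        simp [div_eq_mul_inv]

lemma exp_shifted_gaussian_le {α l s x v : ℝ} (hα : 0 < α) (hs : 0 ≤ s) (hx : x ≤ 0) :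
    exp (-s * ((x - α * v) * l / α) ^ 2 / 2)
      ≤ exp (-(l ^ 2 / (2 * α ^ 2)) * s * x ^ 2) * exp (-(s * l ^ 2 / α * |x|) * v) := by
  rw [← exp_add, exp_le_exp, abs_of_nonpos hx]
  have hgap : -(l ^ 2 / (2 * α ^ 2)) * s * x ^ 2 + -(s * l ^ 2 / α * -x) * v
      - -s * ((x - α * v) * l / α) ^ 2 / 2 = s * (l / α) ^ 2 * (α * v) ^ 2 / 2 := by
    field_simp
    ring
  have : 0 ≤ s * (l / α) ^ 2 * (α * v) ^ 2 / 2 := by positivity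
  linarith

lemma shifted_zpow_neg_four_le {α l x v : ℝ} (hα : 0 < α) (hl : 0 < l) (hx : x < 0)
    (hv : 0 ≤ v) : ((x - α * v) * l / α) ^ (-4 : ℤ) ≤ (α / l) ^ 4 * (|x| ^ 4)⁻¹ := by
  have hlα : 0 < l / α := div_pos hl hα
  have hxa : 0 < |x| := abs_pos.2 hx.ne
  have hu : |x| * (l / α) ≤ |(x - α * v) * l / α| := by
    rw [mul_div_assoc, abs_mul, abs_of_pos hlα, abs_of_neg hx,
      abs_of_neg (by nlinarith : x - α * v < 0)]
    gcongr
    nlinarith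
  calc ((x - α * v) * l / α) ^ (-4 : ℤ) = (|(x - α * v) * l / α| ^ 4)⁻¹ := by
        rw [zpow_neg, (by decide : Even 4).pow_abs]
        norm_cast
    _ ≤ ((|x| * (l / α)) ^ 4)⁻¹ := by gcongr
    _ = (α / l) ^ 4 * (|x| ^ 4)⁻¹ := by
        rw [mul_pow, mul_inv, ← inv_pow (l / α), inv_div, mul_comm]

lemma norm_tail_integrand_le {α l s x v : ℝ} (hα : 0 < α) (hl : 0 < l) (hs : 0 ≤ s)
    (hx : x < 0) (hv : 0 < v) :
    ‖exp (-s * ((x - α * v) * l / α) ^ 2 / 2) * ((x - α * v) * l / α) ^ (-4 : ℤ) *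
        halfNormalPdf v‖
      ≤ (α / l) ^ 4 * (|x| ^ 4)⁻¹ * √(2 / π) * exp (-(l ^ 2 / (2 * α ^ 2)) * s * x ^ 2) *
        exp (-(s * l ^ 2 / α * |x|) * v) := by
  have hf := halfNormalPdf_nonneg v
  have hP : 0 ≤ ((x - α * v) * l / α) ^ (-4 : ℤ) := by rw [zpow_neg]; positivity
  rw [norm_of_nonneg (by positivity)]
  calc exp (-s * ((x - α * v) * l / α) ^ 2 / 2) * ((x - α * v) * l / α) ^ (-4 : ℤ) *
        halfNormalPdf v
      ≤ (exp (-(l ^ 2 / (2 * α ^ 2)) * s * x ^ 2) * exp (-(s * l ^ 2 / α * |x|) * v)) *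
        ((α / l) ^ 4 * (|x| ^ 4)⁻¹) * √(2 / π) := by
        gcongr
        · exact exp_shifted_gaussian_le hα hs hx.le
        · exact shifted_zpow_neg_four_le hα hl hx hv.le
        · exact halfNormalPdf_le v
    _ = _ := by ring

theorem shifted_gaussian_tail_integral_isBigO {α l s : ℝ} (hα : 0 < α) (hl : 0 < l)
    (hs : 0 < s) :
    (fun x : ℝ => ∫ v in Ioi (0 : ℝ),
        exp (-s * ((x - α * v) * l / α) ^ 2 / 2) * ((x - α * v) * l / α) ^ (-4 : ℤ) *
          halfNormalPdf v)
      =O[atBot] fun x : ℝ => |x| ^ (-5 : ℤ) * exp (-(l ^ 2 / (2 * α ^ 2)) * s * x ^ 2) := by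
  refine IsBigO.of_bound ((α / l) ^ 4 * √(2 / π) * (α / (s * l ^ 2))) ?_
  filter_upwards [eventually_lt_atBot 0] with x hx
  have hxa : 0 < |x| := abs_pos.2 hx.ne
  have ha : 0 < s * l ^ 2 / α * |x| := by positivity
  refine (norm_setIntegral_Ioi_le_of_norm_le_mul_exp ha
    fun v hv => norm_tail_integrand_le hα hl hs.le hx hv).trans (le_of_eq ?_)
  rw [norm_of_nonneg (by positivity), zpow_neg]
  field_simp

theorem joint_tail_correction_term_general (α l β : ℝ) (hα : 0 < α) (hl : 0 < l) :
    (fun x : ℝ =>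
      ∫ v in Set.Ioi (0 : ℝ),
        (1 / π) * Real.exp (-(1 + β ^ 2) * ((x - α * v) * l / α) ^ 2 / 2) *
          (2 / (β * (1 + β ^ 2)) + 1 / (β ^ 3 * (1 + β ^ 2))) *
          ((x - α * v) * l / α) ^ (-4 : ℤ) * halfNormalPdf v)
      =O[atBot] (fun x : ℝ =>
        |x| ^ (-5 : ℤ) * Real.exp (-(l ^ 2 / (2 * α ^ 2)) * (1 + β ^ 2) * x ^ 2)) := by
  set K := 2 / (β * (1 + β ^ 2)) + 1 / (β ^ 3 * (1 + β ^ 2))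
  have hfactor : (fun x : ℝ => ∫ v in Ioi (0 : ℝ),
      (1 / π) * exp (-(1 + β ^ 2) * ((x - α * v) * l / α) ^ 2 / 2) * K *
        ((x - α * v) * l / α) ^ (-4 : ℤ) * halfNormalPdf v)
      = fun x : ℝ => (1 / π * K) * ∫ v in Ioi (0 : ℝ),
        exp (-(1 + β ^ 2) * ((x - α * v) * l / α) ^ 2 / 2) *
          ((x - α * v) * l / α) ^ (-4 : ℤ) * halfNormalPdf v := by
    funext x
    rw [← integral_const_mul]
    congr 1 with v
    ring
  rw [hfactor]
  exact (shifted_gaussian_tail_integral_isBigO hα hl (by positivity)).const_mul_left _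

/-- The higher-order correction term of the joint tail integral is
O(|x|⁻⁵ e^{-(λ²/(2α²))(1+β²)x²}) as x → -∞. -/
theorem joint_tail_correction_term (α l β : ℝ) (hα : 0 < α) (hl : 0 < l) (hβ : 0 < β) :
    (fun x : ℝ =>
      ∫ v in Set.Ioi (0 : ℝ),
        (1 / π) * Real.exp (-(1 + β ^ 2) * ((x - α * v) * l / α) ^ 2 / 2) *
          (2 / (β * (1 + β ^ 2)) + 1 / (β ^ 3 * (1 + β ^ 2))) *
          ((x - α * v) * l / α) ^ (-4 : ℤ) * halfNormalPdf v)
      =O[atBot] (fun x : ℝ =>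
        |x| ^ (-5 : ℤ) * Real.exp (-(l ^ 2 / (2 * α ^ 2)) * (1 + β ^ 2) * x ^ 2)) :=
  joint_tail_correction_term_general α l β hα hl
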